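/- arXiv:2110.01553 — 3 statements merged into one kernel-verified Lean document; each statement's English description precedes it below -/
import Mathlib

section
/- Let (b_k)_{k≥1} be a sequence of nonnegative real numbers satisfying b_k ≤ C · Σ_{k₁+k₂=k, k₁,k₂≥1} b_{k₁} b_{k₂} for all k ≥ 2, where C > 0. Then b_k ≤ b₁ · C₀^{k-1} for all k ≥ 1, where C₀ = (2π²/3) · C · b₁. -/
open Finset

lemma basel_finset_sum (s : Finset ℕ) : ∑ i ∈ s, (1:ℝ)/(i:ℝ)^2 ≤ Real.pi^2/6 :=
  sum_le_hasSum s (fun i _ => by positivity) hasSum_zeta_two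

lemma refl_sum (k : ℕ) :
    ∑ i ∈ Finset.Ioo 0 k, (1:ℝ)/((k-i:ℕ):ℝ)^2 = ∑ i ∈ Finset.Ioo 0 k, (1:ℝ)/(i:ℝ)^2 := by
  refine Finset.sum_nbij' (fun i => k - i) (fun i => k - i) ?_ ?_ ?_ ?_ ?_ <;>
    (intro a ha; simp only [mem_Ioo] at *) <;> omega

lemma key_sum (k : ℕ) (hk : 2 ≤ k) :
    ∑ i ∈ Finset.Ioo 0 k, (1:ℝ)/((i:ℝ)^2 * ((k-i:ℕ):ℝ)^2) ≤ 2*Real.pi^2/3 / (k:ℝ)^2 := by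
  have hk0 : (0:ℝ) < k := by exact_mod_cast (by omega : 0 < k)
  have step : ∀ i ∈ Finset.Ioo 0 k, (1:ℝ)/((i:ℝ)^2 * ((k-i:ℕ):ℝ)^2)
      ≤ 2/(k:ℝ)^2 * ((1:ℝ)/(i:ℝ)^2 + (1:ℝ)/((k-i:ℕ):ℝ)^2) := by
    intro i hi
    simp only [mem_Ioo] at hi
    have hx : (1:ℝ) ≤ (i:ℝ) := by exact_mod_cast hi.1
    have hy : (1:ℝ) ≤ ((k-i:ℕ):ℝ) := by exact_mod_cast (by omega : 1 ≤ k - i)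
    have hxy : (i:ℝ) + ((k-i:ℕ):ℝ) = (k:ℝ) := by exact_mod_cast (by omega : i + (k-i) = k)
    set x := (i:ℝ); set y := ((k-i:ℕ):ℝ)
    have hx0 : (0:ℝ) < x := lt_of_lt_of_le one_pos hx
    have hy0 : (0:ℝ) < y := lt_of_lt_of_le one_pos hy
    have h2 : (k:ℝ)^2 ≤ 2*(x^2+y^2) := by nlinarith [sq_nonneg (x-y)]
    rw [div_add_div _ _ (by positivity) (by positivity), div_mul_div_comm,
      div_le_div_iff₀ (by positivity) (by positivity)]
    nlinarith [mul_le_mul_of_nonneg_right h2 (by positivity : (0:ℝ) ≤ x^2*y^2)]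
  calc ∑ i ∈ Finset.Ioo 0 k, (1:ℝ)/((i:ℝ)^2 * ((k-i:ℕ):ℝ)^2)
      ≤ ∑ i ∈ Finset.Ioo 0 k, 2/(k:ℝ)^2 * ((1:ℝ)/(i:ℝ)^2 + (1:ℝ)/((k-i:ℕ):ℝ)^2) :=
        sum_le_sum step
    _ = 2/(k:ℝ)^2 * (∑ i ∈ Finset.Ioo 0 k, (1:ℝ)/(i:ℝ)^2
          + ∑ i ∈ Finset.Ioo 0 k, (1:ℝ)/((k-i:ℕ):ℝ)^2) := by
        rw [← mul_sum, sum_add_distrib]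
    _ = 2/(k:ℝ)^2 * (2 * ∑ i ∈ Finset.Ioo 0 k, (1:ℝ)/(i:ℝ)^2) := by
        rw [refl_sum]; ring
    _ ≤ 2/(k:ℝ)^2 * (2 * (Real.pi^2/6)) := by
        have := basel_finset_sum (Finset.Ioo 0 k)
        have h1 : (0:ℝ) ≤ 2/(k:ℝ)^2 := by positivity
        nlinarith
    _ = 2*Real.pi^2/3 / (k:ℝ)^2 := by ring

/-- Discrete recursion lemma (Kishimoto): if `b_k ≤ C ∑_{k₁+k₂=k} b_{k₁} b_{k₂}` for `k ≥ 2`,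
then `b_k ≤ b₁ C₀^{k-1}` with `C₀ = (2π²/3) C b₁`. -/
theorem discrete_recursion_bound (b : ℕ → ℝ) (hb : ∀ k, 0 ≤ b k) (C : ℝ) (hC : 0 < C)
    (hrec : ∀ k, 2 ≤ k → b k ≤ C * ∑ i ∈ Finset.Ioo 0 k, b i * b (k - i)) :
    ∀ k, 1 ≤ k → b k ≤ b 1 * (2 * Real.pi ^ 2 / 3 * C * b 1) ^ (k - 1) := by
  have hb1 : 0 ≤ b 1 := hb 1
  set C₀ : ℝ := 2 * Real.pi ^ 2 / 3 * C * b 1 with hC₀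
  have hC₀0 : 0 ≤ C₀ := by rw [hC₀]; positivity
  have key : ∀ k, 1 ≤ k → b k ≤ b 1 * C₀ ^ (k-1) / (k:ℝ)^2 := by
    intro k
    induction k using Nat.strong_induction_on with
    | _ k ih =>
      intro hk
      rcases eq_or_lt_of_le hk with h1 | h2
      · rw [← h1]; norm_num
      · have hk2 : 2 ≤ k := h2
        have hsum1 : ∀ i ∈ Finset.Ioo 0 k, b i * b (k-i)
            ≤ b 1 ^ 2 * C₀^(k-2) * ((1:ℝ)/((i:ℝ)^2 * ((k-i:ℕ):ℝ)^2)) := by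
          intro i hi
          simp only [mem_Ioo] at hi
          have hbi := ih i (by omega) (by omega)
          have hbk := ih (k-i) (by omega) (by omega)
          have hnn : 0 ≤ b 1 * C₀^((k-i)-1) / ((k-i:ℕ):ℝ)^2 := by positivity
          have hmul := mul_le_mul hbi hbk (hb _) (by positivity)
          have hi0 : (0:ℝ) < (i:ℝ) := by exact_mod_cast hi.1
          have hki0 : (0:ℝ) < ((k-i:ℕ):ℝ) := by exact_mod_cast (by omega : 0 < k - i)
          calc b i * b (k-i)
              ≤ (b 1 * C₀^(i-1) / (i:ℝ)^2) * (b 1 * C₀^((k-i)-1) / ((k-i:ℕ):ℝ)^2) := hmul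
            _ = b 1 ^ 2 * (C₀^(i-1) * C₀^((k-i)-1)) * ((1:ℝ)/((i:ℝ)^2 * ((k-i:ℕ):ℝ)^2)) := by
                ring
            _ = b 1 ^ 2 * C₀^(k-2) * ((1:ℝ)/((i:ℝ)^2 * ((k-i:ℕ):ℝ)^2)) := by
                rw [← pow_add, (by omega : i - 1 + ((k-i) - 1) = k - 2)]
        have hk0 : (0:ℝ) < k := by exact_mod_cast (by omega : 0 < k)
        calc b k ≤ C * ∑ i ∈ Finset.Ioo 0 k, b i * b (k - i) := hrec k hk2
          _ ≤ C * ∑ i ∈ Finset.Ioo 0 k,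
                b 1 ^ 2 * C₀^(k-2) * ((1:ℝ)/((i:ℝ)^2 * ((k-i:ℕ):ℝ)^2)) :=
              mul_le_mul_of_nonneg_left (sum_le_sum hsum1) hC.le
          _ = C * (b 1 ^ 2 * C₀^(k-2))
                * ∑ i ∈ Finset.Ioo 0 k, (1:ℝ)/((i:ℝ)^2 * ((k-i:ℕ):ℝ)^2) := by
              rw [← mul_sum]; ring
          _ ≤ C * (b 1 ^ 2 * C₀^(k-2)) * (2*Real.pi^2/3 / (k:ℝ)^2) := by
              refine mul_le_mul_of_nonneg_left (key_sum k hk2) ?_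
              positivity
          _ = b 1 * C₀ ^ (k-1) / (k:ℝ)^2 := by
              have hexp : k - 1 = (k-2) + 1 := by omega
              rw [hexp, pow_succ, hC₀]
              ring
  intro k hk
  refine (key k hk).trans ?_
  have hk1 : (1:ℝ) ≤ (k:ℝ)^2 := by
    have : (1:ℝ) ≤ (k:ℝ) := by exact_mod_cast hk
    nlinarith
  exact div_le_self (by positivity) hk1
end

section
/- Let Φ(ξ, ξ₁, ξ₂) = ξξ₁ξ₂(ξ² - ξ₁ξ₂ + 3)/((1+ξ₁²)(1+ξ₂²)(1+ξ²)) with ξ = ξ₁ + ξ₂. There exist constants 0 < c₁ ≤ c₂ and N₀ ≥ 2 such that for all N ≥ N₀, all ξ ∈ [1/2, 1], and all ξ₁ ∈ [N-1, N+1], ξ₂ = ξ - ξ₁ ∈ [-N-1, -N+1], one has c₁ ≤ |Φ(ξ, ξ₁, ξ₂)| ≤ c₂. -/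
set_option maxHeartbeats 1000000 in
/-- Nonresonance on the frequency region of the second Picard iterate: for
`ξ ∈ [1/2,1]`, `ξ₁ ∈ [N-1,N+1]`, `ξ₂ = ξ - ξ₁ ∈ [-N-1,-N+1]` and `N` large,
the resonance function `Φ = ξξ₁ξ₂(ξ² - ξ₁ξ₂ + 3)/((1+ξ₁²)(1+ξ₂²)(1+ξ²))`
satisfies `|Φ| ∼ 1`. -/
theorem bbm_resonance_size :
    ∃ c₁ c₂ N₀ : ℝ, 0 < c₁ ∧ c₁ ≤ c₂ ∧ 2 ≤ N₀ ∧
      ∀ N : ℝ, N₀ ≤ N →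
        ∀ ξ ∈ Set.Icc (1/2 : ℝ) 1, ∀ ξ₁ ∈ Set.Icc (N - 1) (N + 1),
          ξ - ξ₁ ∈ Set.Icc (-N - 1) (-N + 1) →
            c₁ ≤ |ξ * ξ₁ * (ξ - ξ₁) * (ξ ^ 2 - ξ₁ * (ξ - ξ₁) + 3)
                  / ((1 + ξ₁ ^ 2) * (1 + (ξ - ξ₁) ^ 2) * (1 + ξ ^ 2))| ∧
            |ξ * ξ₁ * (ξ - ξ₁) * (ξ ^ 2 - ξ₁ * (ξ - ξ₁) + 3)
                  / ((1 + ξ₁ ^ 2) * (1 + (ξ - ξ₁) ^ 2) * (1 + ξ ^ 2))| ≤ c₂ := by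
  refine ⟨1/100, 10, 4, by norm_num, by norm_num, by norm_num, ?_⟩
  intro N hN ξ hξ ξ₁ hξ₁ hξ₂
  obtain ⟨hx1, hx2⟩ := hξ
  obtain ⟨ha1, ha2⟩ := hξ₁
  obtain ⟨hb1, hb2⟩ := hξ₂
  have hN4 : (4:ℝ) ≤ N := hN
  set b : ℝ := ξ - ξ₁ with hbdef
  clear_value b
  have hxpos : 0 < ξ := by linarith
  have hapos : (3:ℝ) ≤ ξ₁ := by linarith
  have hbneg : b ≤ -3 := by linarith
  have hc1 : N - 1 ≤ -b := by linarith
  have hc2 : -b ≤ N + 1 := by linarith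
  have hM : (3:ℝ) ≤ N - 1 := by linarith
  have hMpos : (0:ℝ) < (N-1)^2 := by positivity
  have hxsq : ξ^2 ≤ 1 := by nlinarith
  have hP1 : (N-1)^2 ≤ ξ₁ * (-b) := by
    nlinarith [mul_le_mul ha1 hc1 (by linarith : (0:ℝ) ≤ N - 1) (by linarith : (0:ℝ) ≤ ξ₁)]
  have hP2 : ξ₁ * (-b) ≤ (N+1)^2 := by
    nlinarith [mul_le_mul ha2 hc2 (by linarith : (0:ℝ) ≤ -b) (by linarith : (0:ℝ) ≤ N + 1)]
  have hPpos : 0 < ξ₁ * (-b) := by nlinarith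
  have hF1 : (N-1)^2 ≤ ξ^2 - ξ₁ * b + 3 := by nlinarith [hP1, sq_nonneg ξ]
  have hF2 : ξ^2 - ξ₁ * b + 3 ≤ (N+1)^2 + 4 := by nlinarith [hP2, hxsq]
  have hFpos : 0 < ξ^2 - ξ₁ * b + 3 := by nlinarith [hPpos, sq_nonneg ξ]
  have hA1 : (N-1)^2 ≤ 1 + ξ₁^2 := by
    nlinarith [mul_le_mul ha1 ha1 (by linarith : (0:ℝ) ≤ N - 1) (by linarith : (0:ℝ) ≤ ξ₁)]
  have hA2 : 1 + ξ₁^2 ≤ 3 * (N-1)^2 := by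
    nlinarith [mul_le_mul ha2 ha2 (by linarith : (0:ℝ) ≤ ξ₁) (by linarith : (0:ℝ) ≤ N + 1),
      mul_nonneg (by linarith : (0:ℝ) ≤ N) (by linarith : (0:ℝ) ≤ N - 4)]
  have hB1 : (N-1)^2 ≤ 1 + b^2 := by
    nlinarith [mul_le_mul hc1 hc1 (by linarith : (0:ℝ) ≤ N - 1) (by linarith : (0:ℝ) ≤ -b)]
  have hB2 : 1 + b^2 ≤ 3 * (N-1)^2 := by
    nlinarith [mul_le_mul hc2 hc2 (by linarith : (0:ℝ) ≤ -b) (by linarith : (0:ℝ) ≤ N + 1),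
      mul_nonneg (by linarith : (0:ℝ) ≤ N) (by linarith : (0:ℝ) ≤ N - 4)]
  have hC1 : (1:ℝ) ≤ 1 + ξ^2 := by nlinarith [sq_nonneg ξ]
  have hC2 : 1 + ξ^2 ≤ 2 := by linarith [hxsq]
  have hD : 0 < (1 + ξ₁^2) * (1 + b^2) * (1 + ξ^2) := by positivity
  have hNumneg : ξ * ξ₁ * b * (ξ^2 - ξ₁ * b + 3) < 0 := by
    have h1 : ξ * ξ₁ * b < 0 := mul_neg_of_pos_of_neg (by nlinarith) (by linarith)
    exact mul_neg_of_neg_of_pos h1 hFpos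
  have habs : |ξ * ξ₁ * b * (ξ^2 - ξ₁ * b + 3)
        / ((1 + ξ₁^2) * (1 + b^2) * (1 + ξ^2))|
      = (ξ * (ξ₁ * (-b) * (ξ^2 - ξ₁ * b + 3)))
        / ((1 + ξ₁^2) * (1 + b^2) * (1 + ξ^2)) := by
    rw [abs_of_neg (div_neg_of_neg_of_pos hNumneg hD)]
    ring
  rw [habs]
  have hPF : (N-1)^2 * (N-1)^2 ≤ ξ₁ * (-b) * (ξ^2 - ξ₁ * b + 3) :=
    mul_le_mul hP1 hF1 (le_of_lt hMpos) (le_of_lt hPpos)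
  have hPFub : ξ₁ * (-b) * (ξ^2 - ξ₁ * b + 3) ≤ (N+1)^2 * ((N+1)^2 + 4) :=
    mul_le_mul hP2 hF2 (le_of_lt hFpos) (by positivity)
  have hDub : (1 + ξ₁^2) * (1 + b^2) * (1 + ξ^2) ≤ (3*(N-1)^2) * (3*(N-1)^2) * 2 :=
    mul_le_mul (mul_le_mul hA2 hB2 (by positivity) (by positivity)) hC2
      (by positivity) (by positivity)
  have hDlb : (N-1)^2 * ((N-1)^2) * 1 ≤ (1 + ξ₁^2) * (1 + b^2) * (1 + ξ^2) :=
    mul_le_mul (mul_le_mul hA1 hB1 (le_of_lt hMpos) (by positivity)) hC1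
      (by norm_num) (by positivity)
  constructor
  · rw [le_div_iff₀ hD]
    have hxPF : (1/2) * ((N-1)^2 * (N-1)^2) ≤ ξ * (ξ₁ * (-b) * (ξ^2 - ξ₁ * b + 3)) :=
      mul_le_mul hx1 hPF (by positivity) (by linarith)
    linarith [hxPF, hDub, sq_nonneg ((N-1)^2)]
  · rw [div_le_iff₀ hD]
    have hxPF : ξ * (ξ₁ * (-b) * (ξ^2 - ξ₁ * b + 3)) ≤ 1 * ((N+1)^2 * ((N+1)^2 + 4)) :=
      mul_le_mul hx2 hPFub (le_of_lt (by positivity)) (by norm_num)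
    have h9 : (0:ℝ) ≤ 9*N^3 - 8*N^2 + 18*N + 20 := by
      nlinarith [mul_nonneg (sq_nonneg N) (by linarith : (0:ℝ) ≤ 9*N - 8)]
    have hpoly : (N+1)^2 * ((N+1)^2 + 4) ≤ 10 * ((N-1)^2 * ((N-1)^2) * 1) := by
      nlinarith [mul_nonneg (by linarith : (0:ℝ) ≤ N - 4) h9]
    linarith [hxPF, hpoly, hDlb]
end

section
/- Let s < 0, R > 0, N ≥ 2, and let φ_{0,N} be defined via 𝓕φ_{0,N} = R·χ_{I_N}, where I_N = [-N-1,-N+1] ∪ [N-1,N+1]. Then for all 1 ≤ p, q ≤ ∞ there exist constants c, C > 0 (independent of R, N) with c·R·N^s ≤ ‖φ_{0,N}‖_{ŵ^{p,q}_s(ℝ)} ≤ C·R·N^s. -/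
open MeasureTheory Set
open scoped ENNReal

/-! The Fourier support of `φ_{0,N}` meets only the unit cubes around the eight integers
`nearFrequencies N` near `±N`. On each of them the local `L^p` norm is at most `R` and the
weight `⟨n⟩^s` is comparable to `N^s` with constants depending only on `s`, because `⟨n⟩` and
`N` differ by a factor at most `4` there; so the `ℓ^q` norm is at most `8^{1/q}` times that
bound. Conversely the cube around the integer nearest to `N` lies inside the support, so its
local norm is exactly `R` and that single term already gives the lower bound. -/
/-- The Fourier amalgam norm `‖f‖_{ŵ^{p,q}_s}`, computed from the Fourier transform
`fhat = 𝓕f`: `‖ ‖χ_{n+Q₁} fhat‖_{L^p} ⟨n⟩^s ‖_{ℓ^q_n(ℤ)}` with `Q₁ = (-1/2,1/2]`. -/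
noncomputable def fourierAmalgamNorm (p q : ℝ≥0∞) (s : ℝ) (fhat : ℝ → ℂ) : ℝ≥0∞ :=
  eLpNorm
    (fun n : ℤ =>
      (eLpNorm ((Set.Ioc ((n : ℝ) - 1/2) ((n : ℝ) + 1/2)).indicator fhat) p volume).toReal
        * ((1 + (n : ℝ) ^ 2) ^ (s / 2)))
    q Measure.count

lemma rpow_mem_Icc_of_mem_Icc {a b y : ℝ} (ha : 0 < a) (hb : 0 < b)
    (hy : y ∈ Icc (b / a) (a * b)) (t : ℝ) :
    y ^ t ∈ Icc (a ^ (-|t|) * b ^ t) (a ^ |t| * b ^ t) := by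
  have hy0 : 0 < y := (div_pos hb ha).trans_le hy.1
  have hlog : |Real.log y - Real.log b| ≤ Real.log a := by
    have h₁ := Real.log_le_log (div_pos hb ha) hy.1
    have h₂ := Real.log_le_log hy0 hy.2
    rw [Real.log_div hb.ne' ha.ne'] at h₁
    rw [Real.log_mul ha.ne' hb.ne'] at h₂
    rw [abs_le]
    constructor <;> linarith
  have hexponent : |(Real.log y - Real.log b) * t| ≤ Real.log a * |t| := by
    rw [abs_mul]
    exact mul_le_mul_of_nonneg_right hlog (abs_nonneg t)
  rw [abs_le] at hexponent
  simp only [Real.rpow_def_of_pos, hy0, ha, hb, ← Real.exp_add, mem_Icc, Real.exp_le_exp]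
  constructor <;> linarith

lemma eLpNorm_count_le_of_support_subset {α : Type*} [MeasurableSpace α]
    [MeasurableSingletonClass α] {f : α → ℝ} {F : Finset α} (hf : f.support ⊆ F) {C : ℝ}
    (hC : ∀ a ∈ F, ‖f a‖ ≤ C) (q : ℝ≥0∞) :
    eLpNorm f q Measure.count ≤ (F.card : ℝ≥0∞) ^ q.toReal⁻¹ * ENNReal.ofReal C := by
  rw [← eLpNorm_restrict_eq_of_support_subset hf]
  refine (eLpNorm_le_of_ae_bound (ae_restrict_of_forall_mem F.measurableSet hC)).trans_eq ?_
  rw [Measure.restrict_apply_univ, Measure.count_apply_finset]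

def unitCube (n : ℤ) : Set ℝ := Ioc ((n : ℝ) - 1 / 2) ((n : ℝ) + 1 / 2)

lemma volume_unitCube (n : ℤ) : volume (unitCube n) = 1 := by
  rw [unitCube, Real.volume_Ioc]
  norm_num

lemma measurableSet_unitCube (n : ℤ) : MeasurableSet (unitCube n) := measurableSet_Ioc

section LocalNorm

variable {E : Type*} [NormedAddCommGroup E] (p : ℝ≥0∞) (S : Set ℝ) (c : E)

lemma eLpNorm_unitCube_indicator_le (n : ℤ) :
    eLpNorm ((unitCube n).indicator (S.indicator fun _ => c)) p volume ≤ ‖c‖ₑ := by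
  rw [indicator_indicator]
  refine (eLpNorm_indicator_const_le c p).trans ?_
  have hvol : volume (unitCube n ∩ S) ≤ 1 :=
    (measure_mono inter_subset_left).trans (volume_unitCube n).le
  calc ‖c‖ₑ * volume (unitCube n ∩ S) ^ (1 / p.toReal) ≤ ‖c‖ₑ * 1 := by
        gcongr
        exact ENNReal.rpow_le_one hvol (by positivity)
    _ = ‖c‖ₑ := mul_one _

variable {p S} {n : ℤ}

lemma eLpNorm_unitCube_indicator_of_subset (hp : p ≠ 0) (h : unitCube n ⊆ S) :
    eLpNorm ((unitCube n).indicator (S.indicator fun _ => c)) p volume = ‖c‖ₑ := by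
  rw [indicator_indicator, inter_eq_left.mpr h,
    eLpNorm_indicator_const' (measurableSet_unitCube n) (by simp [volume_unitCube]) hp,
    volume_unitCube, ENNReal.one_rpow, mul_one]

lemma unitCube_indicator_eq_zero_of_disjoint (f : ℝ → E) (h : Disjoint (unitCube n) S) :
    (unitCube n).indicator (S.indicator f) = 0 := by
  rw [indicator_indicator, h.inter_eq, indicator_empty]
  rfl

end LocalNorm

def twinIntervals (N : ℝ) : Set ℝ := Icc (-N - 1) (-N + 1) ∪ Icc (N - 1) (N + 1)

noncomputable def nearFrequencies (N : ℝ) : Finset ℤ :=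
  Finset.Icc (⌊N⌋ - 1) (⌊N⌋ + 2) ∪ Finset.Icc (-⌊N⌋ - 2) (-⌊N⌋ + 1)

lemma card_nearFrequencies_le (N : ℝ) : (nearFrequencies N).card ≤ 8 := by
  refine (Finset.card_union_le _ _).trans ?_
  simp only [Int.card_Icc]
  omega

lemma floor_add_half_mem_nearFrequencies (N : ℝ) : ⌊N + 1 / 2⌋ ∈ nearFrequencies N := by
  have h₁ : ⌊N⌋ ≤ ⌊N + 1 / 2⌋ := Int.floor_mono (by linarith)
  have h₂ : ⌊N + 1 / 2⌋ ≤ ⌊N⌋ + 1 := by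
    rw [← Int.floor_add_one]
    exact Int.floor_mono (by linarith)
  simp only [nearFrequencies, Finset.mem_union, Finset.mem_Icc]
  omega

lemma unitCube_floor_add_half_subset (N : ℝ) : unitCube ⌊N + 1 / 2⌋ ⊆ twinIntervals N := by
  rintro x ⟨hx₁, hx₂⟩
  have h₁ := Int.floor_le (N + 1 / 2)
  have h₂ := Int.lt_floor_add_one (N + 1 / 2)
  exact Or.inr ⟨by linarith, by linarith⟩

lemma disjoint_unitCube_twinIntervals {N : ℝ} {n : ℤ} (hn : n ∉ nearFrequencies N) :
    Disjoint (unitCube n) (twinIntervals N) := by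
  rw [Set.disjoint_left]
  rintro x ⟨hx₁, hx₂⟩ hx
  have h₁ := Int.floor_le N
  have h₂ := Int.lt_floor_add_one N
  simp only [nearFrequencies, Finset.mem_union, Finset.mem_Icc] at hn
  rcases hx with ⟨hx₃, hx₄⟩ | ⟨hx₃, hx₄⟩
  · have d₁ : ((-⌊N⌋ - 3 : ℤ) : ℝ) < n := by push_cast; linarith
    have d₂ : (n : ℝ) < ((-⌊N⌋ + 2 : ℤ) : ℝ) := by push_cast; linarith
    have := Int.cast_lt.mp d₁
    have := Int.cast_lt.mp d₂
    omega
  · have d₁ : ((⌊N⌋ - 2 : ℤ) : ℝ) < n := by push_cast; linarith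
    have d₂ : (n : ℝ) < ((⌊N⌋ + 3 : ℤ) : ℝ) := by push_cast; linarith
    have := Int.cast_lt.mp d₁
    have := Int.cast_lt.mp d₂
    omega

lemma one_add_sq_mem_Icc_of_mem_nearFrequencies {N : ℝ} (hN : 2 ≤ N) {n : ℤ}
    (hn : n ∈ nearFrequencies N) : 1 + (n : ℝ) ^ 2 ∈ Icc (N ^ 2 / 16) (16 * N ^ 2) := by
  have h₁ := Int.floor_le N
  have h₂ := Int.lt_floor_add_one N
  have habs : N - 2 ≤ |(n : ℝ)| ∧ |(n : ℝ)| ≤ N + 2 := by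
    simp only [nearFrequencies, Finset.mem_union, Finset.mem_Icc] at hn
    rcases hn with ⟨hn₁, hn₂⟩ | ⟨hn₁, hn₂⟩
    · have e₁ : ((⌊N⌋ - 1 : ℤ) : ℝ) ≤ n := Int.cast_le.mpr hn₁
      have e₂ : (n : ℝ) ≤ ((⌊N⌋ + 2 : ℤ) : ℝ) := Int.cast_le.mpr hn₂
      push_cast at e₁ e₂
      rw [abs_of_nonneg (by linarith)]
      constructor <;> linarith
    · have e₁ : ((-⌊N⌋ - 2 : ℤ) : ℝ) ≤ n := Int.cast_le.mpr hn₁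
      have e₂ : (n : ℝ) ≤ ((-⌊N⌋ + 1 : ℤ) : ℝ) := Int.cast_le.mpr hn₂
      push_cast at e₁ e₂
      rw [abs_of_nonpos (by linarith)]
      constructor <;> linarith
  have hlow := mul_le_mul habs.1 habs.1 (by linarith) (abs_nonneg (n : ℝ))
  have hupp := mul_le_mul habs.2 habs.2 (abs_nonneg (n : ℝ)) (by linarith)
  rw [← sq_abs (n : ℝ)]
  constructor <;> nlinarith [sq_nonneg (15 * N - 32)]

lemma rpow_mem_Icc_of_mem_nearFrequencies {N : ℝ} (hN : 2 ≤ N) {n : ℤ}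
    (hn : n ∈ nearFrequencies N) (s : ℝ) :
    (1 + (n : ℝ) ^ 2) ^ (s / 2) ∈ Icc (16 ^ (-|s / 2|) * N ^ s) (16 ^ |s / 2| * N ^ s) := by
  have hNs : (N ^ 2) ^ (s / 2) = N ^ s := by
    rw [← Real.rpow_natCast, ← Real.rpow_mul (by linarith)]
    congr 1
    push_cast
    ring
  rw [← hNs]
  exact rpow_mem_Icc_of_mem_Icc (by norm_num) (by positivity)
    (one_add_sq_mem_Icc_of_mem_nearFrequencies hN hn) _

noncomputable def amalgamTerm (p : ℝ≥0∞) (s : ℝ) (fhat : ℝ → ℂ) (n : ℤ) : ℝ :=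
  (eLpNorm ((unitCube n).indicator fhat) p volume).toReal * (1 + (n : ℝ) ^ 2) ^ (s / 2)

lemma fourierAmalgamNorm_eq_eLpNorm_amalgamTerm (p q : ℝ≥0∞) (s : ℝ) (fhat : ℝ → ℂ) :
    fourierAmalgamNorm p q s fhat = eLpNorm (amalgamTerm p s fhat) q Measure.count :=
  rfl

lemma amalgamTerm_nonneg (p : ℝ≥0∞) (s : ℝ) (fhat : ℝ → ℂ) (n : ℤ) :
    0 ≤ amalgamTerm p s fhat n :=
  mul_nonneg ENNReal.toReal_nonneg (Real.rpow_nonneg (by positivity) _)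

section TwinIntervals

variable {p : ℝ≥0∞} {s R N : ℝ}

lemma le_amalgamTerm_floor_add_half (hp : p ≠ 0) (hR : 0 ≤ R) (hN : 2 ≤ N) :
    16 ^ (-|s / 2|) * R * N ^ s ≤
      amalgamTerm p s ((twinIntervals N).indicator fun _ => (R : ℂ)) ⌊N + 1 / 2⌋ := by
  have hw := (rpow_mem_Icc_of_mem_nearFrequencies hN (floor_add_half_mem_nearFrequencies N) s).1
  rw [amalgamTerm, eLpNorm_unitCube_indicator_of_subset _ hp (unitCube_floor_add_half_subset N),
    toReal_enorm, Complex.norm_real, Real.norm_of_nonneg hR]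
  calc 16 ^ (-|s / 2|) * R * N ^ s = R * (16 ^ (-|s / 2|) * N ^ s) := by ring
    _ ≤ _ := by gcongr

lemma support_amalgamTerm_subset (c : ℂ) :
    (amalgamTerm p s ((twinIntervals N).indicator fun _ => c)).support ⊆ nearFrequencies N := by
  intro n hn
  by_contra h
  apply hn
  rw [amalgamTerm, unitCube_indicator_eq_zero_of_disjoint _ (disjoint_unitCube_twinIntervals h),
    eLpNorm_zero, ENNReal.toReal_zero, zero_mul]

lemma norm_amalgamTerm_le (hR : 0 ≤ R) (hN : 2 ≤ N) {n : ℤ} (hn : n ∈ nearFrequencies N) :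
    ‖amalgamTerm p s ((twinIntervals N).indicator fun _ => (R : ℂ)) n‖ ≤
      16 ^ |s / 2| * R * N ^ s := by
  have hw := (rpow_mem_Icc_of_mem_nearFrequencies hN hn s).2
  have hloc : (eLpNorm ((unitCube n).indicator ((twinIntervals N).indicator fun _ => (R : ℂ)))
      p volume).toReal ≤ R := by
    refine (ENNReal.toReal_mono enorm_ne_top (eLpNorm_unitCube_indicator_le p _ _ n)).trans_eq ?_
    rw [toReal_enorm, Complex.norm_real, Real.norm_of_nonneg hR]
  rw [Real.norm_of_nonneg (amalgamTerm_nonneg _ _ _ _), amalgamTerm]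
  calc _ ≤ R * (16 ^ |s / 2| * N ^ s) :=
        mul_le_mul hloc hw (Real.rpow_nonneg (by positivity) _) hR
    _ = 16 ^ |s / 2| * R * N ^ s := by ring

end TwinIntervals

theorem perturbation_amalgam_norm_general (s : ℝ) (p q : ℝ≥0∞)
    (hp : 1 ≤ p) (hq : 1 ≤ q) :
    ∃ c C : ℝ, 0 < c ∧ 0 < C ∧
      ∀ R N : ℝ, 0 < R → 2 ≤ N →
        ENNReal.ofReal (c * R * N ^ s) ≤
            fourierAmalgamNorm p q s
              ((Set.Icc (-N - 1) (-N + 1) ∪ Set.Icc (N - 1) (N + 1)).indicator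
                (fun _ => (R : ℂ))) ∧
          fourierAmalgamNorm p q s
              ((Set.Icc (-N - 1) (-N + 1) ∪ Set.Icc (N - 1) (N + 1)).indicator
                (fun _ => (R : ℂ)))
            ≤ ENNReal.ofReal (C * R * N ^ s) := by
  have hp₀ : p ≠ 0 := (zero_lt_one.trans_le hp).ne'
  have hq₀ : q ≠ 0 := (zero_lt_one.trans_le hq).ne'
  refine ⟨16 ^ (-|s / 2|), 8 ^ q.toReal⁻¹ * 16 ^ |s / 2|, by positivity, by positivity,
    fun R N hR hN => ⟨?_, ?_⟩⟩ <;> rw [fourierAmalgamNorm_eq_eLpNorm_amalgamTerm]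
  · calc ENNReal.ofReal (16 ^ (-|s / 2|) * R * N ^ s)
        ≤ ‖amalgamTerm p s ((twinIntervals N).indicator fun _ => (R : ℂ)) ⌊N + 1 / 2⌋‖ₑ := by
          rw [Real.enorm_of_nonneg (amalgamTerm_nonneg _ _ _ _)]
          exact ENNReal.ofReal_le_ofReal (le_amalgamTerm_floor_add_half hp₀ hR.le hN)
      _ ≤ _ := enorm_le_eLpNorm_count _ _ hq₀
  · calc _ ≤ ((nearFrequencies N).card : ℝ≥0∞) ^ q.toReal⁻¹
          * ENNReal.ofReal (16 ^ |s / 2| * R * N ^ s) :=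
          eLpNorm_count_le_of_support_subset (support_amalgamTerm_subset _)
            (fun _ => norm_amalgamTerm_le hR.le hN) q
      _ ≤ (8 : ℝ≥0∞) ^ q.toReal⁻¹ * ENNReal.ofReal (16 ^ |s / 2| * R * N ^ s) := by
          gcongr
          exact_mod_cast card_nearFrequencies_le N
      _ = _ := by
          rw [show 8 ^ q.toReal⁻¹ * 16 ^ |s / 2| * R * N ^ s
              = 8 ^ q.toReal⁻¹ * (16 ^ |s / 2| * R * N ^ s) by ring,
            ENNReal.ofReal_mul (p := 8 ^ q.toReal⁻¹) (by positivity),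
            ← ENNReal.ofReal_rpow_of_nonneg (x := 8) (by norm_num) (by positivity),
            ENNReal.ofReal_ofNat]

/-- For `𝓕φ_{0,N} = R χ_{I_N}` with `I_N = [-N-1,-N+1] ∪ [N-1,N+1]` and `s < 0`,
one has `‖φ_{0,N}‖_{ŵ^{p,q}_s(ℝ)} ∼ R N^s`, with constants independent of `R, N`. -/
theorem perturbation_amalgam_norm (s : ℝ) (hs : s < 0) (p q : ℝ≥0∞)
    (hp : 1 ≤ p) (hq : 1 ≤ q) :
    ∃ c C : ℝ, 0 < c ∧ 0 < C ∧
      ∀ R N : ℝ, 0 < R → 2 ≤ N →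
        ENNReal.ofReal (c * R * N ^ s) ≤
            fourierAmalgamNorm p q s
              ((Set.Icc (-N - 1) (-N + 1) ∪ Set.Icc (N - 1) (N + 1)).indicator
                (fun _ => (R : ℂ))) ∧
          fourierAmalgamNorm p q s
              ((Set.Icc (-N - 1) (-N + 1) ∪ Set.Icc (N - 1) (N + 1)).indicator
                (fun _ => (R : ℂ)))
            ≤ ENNReal.ofReal (C * R * N ^ s) :=
  perturbation_amalgam_norm_general s p q hp hq
end
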